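/- Let u¹, u² : ℝ × ℝ → ℝ be smooth functions of (x, t) satisfying the dispersionless limit of the first positive Ablowitz–Ladik flow: ∂ₜu¹ = u¹∂ₓu² and ∂ₜu² = u²(2∂ₓu² − ∂ₓu¹). Then v¹ = u² − u¹ and v² = log u² (assuming u² > 0) satisfy ∂ₜv¹ = ∂ₓ(v¹e^{v²}) and ∂ₜv² = ∂ₓ(e^{v²} + v¹); that is, (v¹, v²) solves the flow ∂v^α/∂t^{2,0} = Σ_{β} η^{αβ}∂ₓ(∂θ_{2,1}/∂v^β) of the Principal Hierarchy of the generalized Frobenius manifold with θ_{2,1} = v¹e^{v²} + ½(v¹)² and η^{12} = η^{21} = 1, η^{11} = η^{22} = 0. -/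

import Mathlib

open Function

section Slices

variable {𝕜 E F G : Type*} [NontriviallyNormedField 𝕜]
  [NormedAddCommGroup E] [NormedSpace 𝕜 E] [NormedAddCommGroup F] [NormedSpace 𝕜 F]
  [NormedAddCommGroup G] [NormedSpace 𝕜 G] {f : E → F → G} {x : E} {y : F}

theorem DifferentiableAt.uncurry_left (h : DifferentiableAt 𝕜 (uncurry f) (x, y)) :
    DifferentiableAt 𝕜 (fun x' => f x' y) x :=
  h.comp (f := fun x' => (x', y)) x (differentiableAt_id.prodMk (differentiableAt_const y))

theorem DifferentiableAt.uncurry_right (h : DifferentiableAt 𝕜 (uncurry f) (x, y)) :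
    DifferentiableAt 𝕜 (fun y' => f x y') y :=
  h.comp y ((differentiableAt_const x).prodMk differentiableAt_id)

end Slices

theorem dispersionless_flow_to_principal_hierarchy
    (u1 u2 : ℝ → ℝ → ℝ)
    (hu1 : ContDiff ℝ (⊤ : ℕ∞) (Function.uncurry u1))
    (hu2 : ContDiff ℝ (⊤ : ℕ∞) (Function.uncurry u2))
    (hu2pos : ∀ x t : ℝ, u2 x t > 0)
    (hflow1 : ∀ x t : ℝ,
      deriv (fun s => u1 x s) t = u1 x t * deriv (fun y => u2 y t) x)
    (hflow2 : ∀ x t : ℝ,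
      deriv (fun s => u2 x s) t =
        u2 x t * (2 * deriv (fun y => u2 y t) x - deriv (fun y => u1 y t) x))
    (v1 v2 : ℝ → ℝ → ℝ)
    (hv1 : ∀ x t : ℝ, v1 x t = u2 x t - u1 x t)
    (hv2 : ∀ x t : ℝ, v2 x t = Real.log (u2 x t)) :
    ∀ x t : ℝ,
      deriv (fun s => v1 x s) t =
        deriv (fun y => v1 y t * Real.exp (v2 y t)) x ∧
      deriv (fun s => v2 x s) t =
        deriv (fun y => Real.exp (v2 y t) + v1 y t) x := by
  intro x t
  have hd1 := hu1.differentiable (by simp) (x, t)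
  have hd2 := hu2.differentiable (by simp) (x, t)
  have hu1t := hd1.uncurry_right.hasDerivAt
  have hu2t := hd2.uncurry_right.hasDerivAt
  have hu1x := hd1.uncurry_left.hasDerivAt
  have hu2x := hd2.uncurry_left.hasDerivAt
  -- `e^{v²} = u²` turns both right-hand sides into polynomials in `u¹, u²`.
  have hexp : ∀ y s, Real.exp (v2 y s) = u2 y s := fun y s => by
    rw [hv2, Real.exp_log (hu2pos y s)]
  simp only [hexp, hv1]
  simp only [hv2]
  constructor
  · rw [(hu2t.fun_sub hu1t).deriv, ((hu2x.fun_sub hu1x).fun_mul hu2x).deriv, hflow1, hflow2]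
    ring
  · rw [(hu2t.log (hu2pos x t).ne').deriv, (hu2x.fun_add (hu2x.fun_sub hu1x)).deriv, hflow2]
    field_simp [(hu2pos x t).ne']
    ring
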